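/- Let C_1 >= 1 be a real number and set C_n := n^3 C_1 for every integer n >= 1. If (u_n)_{n >= 1} is a sequence of nonnegative real numbers satisfying u_1 <= 1/(1200 C_1^2) and u_{n+1} <= (1/100) u_n + 6 C_n^2 u_n^2 for every n >= 1, then u_n <= 1/(1200 C_n^2) for every n >= 1. -/

import Mathlib

open scoped Classical
open Finset MeasureTheory

noncomputable section

/-- Vertices of the `N`-page book: a spine vertex `Sum.inl x` is the point `(x, 0)` of the
common bottom line `ℤ × {0}`, and a page vertex `Sum.inr (u, x, y)` is the point of page `u`
with horizontal coordinate `x` at height `y + 1` above the spine. -/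
abbrev BookVertex (N : ℕ) := ℤ ⊕ (Fin N × ℤ × ℕ)

namespace Book

/-- Height above the spine (the second coordinate of the point). -/
def height {N : ℕ} : BookVertex N → ℕ
  | Sum.inl _ => 0
  | Sum.inr (_, _, y) => y + 1

/-- Horizontal coordinate. -/
def xcoord {N : ℕ} : BookVertex N → ℤ
  | Sum.inl x => x
  | Sum.inr (_, x, _) => x

/-- The neighbours of a vertex in the book graph `𝔹_N`. -/
def nbrs (N : ℕ) : BookVertex N → Finset (BookVertex N)
  | Sum.inl x =>
      ({Sum.inl (x + 1), Sum.inl (x - 1)} : Finset (BookVertex N)) ∪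
        (Finset.univ.image fun u : Fin N => (Sum.inr (u, x, 0) : BookVertex N))
  | Sum.inr (u, x, y) =>
      ({Sum.inr (u, x + 1, y), Sum.inr (u, x - 1, y), Sum.inr (u, x, y + 1)} :
          Finset (BookVertex N)) ∪
        (if y = 0 then ({Sum.inl x} : Finset (BookVertex N))
          else ({Sum.inr (u, x, y - 1)} : Finset (BookVertex N)))

/-- Adjacency in the book graph. -/
def adj (N : ℕ) (a b : BookVertex N) : Prop := b ∈ nbrs N a

/-- The box `Λ_n`: all vertices both of whose coordinates lie in `[-n, n]` (in each page). -/
def box (N n : ℕ) : Finset (BookVertex N) :=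
  ((Finset.Icc (-(n : ℤ)) (n : ℤ)).image Sum.inl) ∪
    (((Finset.univ : Finset (Fin N)) ×ˢ (Finset.Icc (-(n : ℤ)) (n : ℤ)) ×ˢ
        (Finset.Iio n)).image Sum.inr)

/-- The inner vertex boundary `∂Λ_n`: vertices of `Λ_n` having a neighbour outside `Λ_n`. -/
def bdry (N n : ℕ) : Finset (BookVertex N) :=
  (box N n).filter fun x => ¬ nbrs N x ⊆ box N n

/-- The `K`-block `B_K^i`: the translate by `(iK, 0)` of the union over the pages of the
box `[-K, K) × [0, K]`. -/
def blockF (N K : ℕ) (i : ℤ) : Finset (BookVertex N) :=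
  ((Finset.Ico (i * K - K) (i * K + K)).image Sum.inl) ∪
    (((Finset.univ : Finset (Fin N)) ×ˢ (Finset.Ico (i * K - K) (i * K + K)) ×ˢ
        (Finset.Iio K)).image Sum.inr)

/-- The edges of the subgraph induced on the vertex set `V`. -/
def edgesOf {N : ℕ} (V : Finset (BookVertex N)) : Finset (Sym2 (BookVertex N)) :=
  ((V ×ˢ V).filter fun p => adj N p.1 p.2).image fun p => s(p.1, p.2)

/-- Spine edges: edges both of whose endpoints lie on the spine. -/
def IsSpineEdge {N : ℕ} (e : Sym2 (BookVertex N)) : Prop :=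
  ∃ x y : ℤ, e = s((Sum.inl x : BookVertex N), (Sum.inl y : BookVertex N))

/-- Percolation configurations on the edge set `s`. -/
abbrev Config {N : ℕ} (s : Finset (Sym2 (BookVertex N))) := {e // e ∈ s} → Bool

variable {N : ℕ}

/-- The edge weight: `lam` on spine edges and `p` elsewhere. -/
def edgeWeight (p lam : ℝ) (e : Sym2 (BookVertex N)) : ℝ :=
  if IsSpineEdge e then lam else p

/-- `a` and `b` are joined by an open edge of the configuration. -/
def openAdj {s : Finset (Sym2 (BookVertex N))} (ω : Config s) (a b : BookVertex N) : Prop :=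
  adj N a b ∧ ∃ h : s(a, b) ∈ s, ω ⟨s(a, b), h⟩ = true

/-- The edge between `a` and `b` is absent or closed (so its dual edge is dual-open). -/
def closedEdge {s : Finset (Sym2 (BookVertex N))} (ω : Config s) (a b : BookVertex N) : Prop :=
  ∀ h : s(a, b) ∈ s, ω ⟨s(a, b), h⟩ = false

/-- `a` and `b` are joined by a path of open edges. -/
def Conn {s : Finset (Sym2 (BookVertex N))} (ω : Config s) (a b : BookVertex N) : Prop :=
  Relation.ReflTransGen (openAdj ω) a b

/-- `a` and `b` are joined by a path of open edges all of whose vertices lie in `S`. -/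
def connIn {s : Finset (Sym2 (BookVertex N))} (ω : Config s) (S : Finset (BookVertex N))
    (a b : BookVertex N) : Prop :=
  Relation.ReflTransGen (fun v w => openAdj ω v w ∧ v ∈ S ∧ w ∈ S) a b

/-- `a` is joined to the set `B` by a path of open edges. -/
def ConnTo {s : Finset (Sym2 (BookVertex N))} (ω : Config s) (a : BookVertex N)
    (B : Finset (BookVertex N)) : Prop :=
  ∃ b ∈ B, Conn ω a b

/-- The cluster equivalence relation: open edges together with the extra wirings `R`
imposed by the boundary condition. -/
def clusterRel {s : Finset (Sym2 (BookVertex N))} (ω : Config s)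
    (R : BookVertex N → BookVertex N → Prop) : BookVertex N → BookVertex N → Prop :=
  Relation.EqvGen fun a b => openAdj ω a b ∨ R a b

/-- `k(ω^ξ)`: the number of clusters among the vertices of `V`, after the wirings `R`. -/
def clusterCount (V : Finset (BookVertex N)) {s : Finset (Sym2 (BookVertex N))} (ω : Config s)
    (R : BookVertex N → BookVertex N → Prop) : ℕ :=
  (V.image fun x => V.filter fun y => clusterRel ω R x y).card

/-- The FK weight `q^{k(ω^ξ)} ∏_e p_e^{ω_e} (1 - p_e)^{1 - ω_e}`. -/
def fkWeight (V : Finset (BookVertex N)) (p lam q : ℝ)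
    (R : BookVertex N → BookVertex N → Prop) (ω : Config (edgesOf V)) : ℝ :=
  q ^ clusterCount V ω R *
    ∏ e : {e // e ∈ edgesOf V},
      (if ω e then edgeWeight p lam e.1 else 1 - edgeWeight p lam e.1)

/-- The FK probability of the event `A` on the induced subgraph on `V`, with edge weight `p`
off the spine, `lam` on the spine, cluster weight `q` and boundary wiring `R`. -/
def fkProb (V : Finset (BookVertex N)) (p lam q : ℝ)
    (R : BookVertex N → BookVertex N → Prop) (A : Config (edgesOf V) → Prop) : ℝ :=
  (∑ ω : Config (edgesOf V), if A ω then fkWeight V p lam q R ω else 0) /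
    ∑ ω : Config (edgesOf V), fkWeight V p lam q R ω

/-- Free boundary conditions. -/
def freeBC (N : ℕ) : BookVertex N → BookVertex N → Prop := fun _ _ => False

/-- Wired boundary conditions on `∂Λ_n`. -/
def wiredBC (N n : ℕ) : BookVertex N → BookVertex N → Prop :=
  fun a b => a ∈ bdry N n ∧ b ∈ bdry N n

/-- The critical point `p_c(q) = √q / (1 + √q)`. -/
def pc (q : ℝ) : ℝ := Real.sqrt q / (1 + Real.sqrt q)

/-! ### Blocks, good blocks and bridges -/

/-- The number of spine vertices of a set. -/
def spineCard (S : Finset (BookVertex N)) : ℕ := (S.filter fun v => v.isLeft = true).card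

/-- The cluster of `x` in `S`: vertices joined to `x` by open paths staying in `S`. -/
def clusterOf {s : Finset (Sym2 (BookVertex N))} (ω : Config s) (S : Finset (BookVertex N))
    (x : BookVertex N) : Finset (BookVertex N) :=
  S.filter fun y => connIn ω S x y

/-- The block `B_K^i` is `θ`-good: some cluster in `B_K^i` meets the spine in at least
`2θK` vertices.  (For `θ > 3/4` such a cluster is unique, so this cluster is `C(B_K^i)`.) -/
def GoodBlock {s : Finset (Sym2 (BookVertex N))} (ω : Config s) (K : ℕ) (i : ℤ) (θ : ℝ) :
    Prop :=
  ∃ x ∈ blockF N K i, 2 * θ * (K : ℝ) ≤ (spineCard (clusterOf ω (blockF N K i) x) : ℝ)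

/-- `p_λ(K, θ)`: the probability that `B_K` is `θ`-bad for the free-boundary FK measure. -/
def pBad (N K : ℕ) (q lam θ : ℝ) : ℝ :=
  fkProb (blockF N K 0) (pc q) lam q (freeBC N) fun ω => ¬ GoodBlock ω K 0 θ

/-- The block `B_K^i` is bridged in `B_{CK}`. -/
def Bridged {s : Finset (Sym2 (BookVertex N))} (ω : Config s) (K C : ℕ) (i : ℤ) : Prop :=
  ∃ im ip : ℤ, -(C : ℤ) ≤ im ∧ im ≤ i - 2 ∧ i + 2 ≤ ip ∧ ip ≤ (C : ℤ) ∧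
    ∃ x ∈ blockF N K im, ∃ y ∈ blockF N K ip,
      (3 / 2 : ℝ) * (K : ℝ) ≤ (spineCard (clusterOf ω (blockF N K im) x) : ℝ) ∧
      (3 / 2 : ℝ) * (K : ℝ) ≤ (spineCard (clusterOf ω (blockF N K ip) y) : ℝ) ∧
      ∃ a b : BookVertex N, a ∈ clusterOf ω (blockF N K im) x ∧
        b ∈ clusterOf ω (blockF N K ip) y ∧
        connIn ω (blockF N (C * K) 0 \ blockF N K i) a b

/-- `q_λ(K, C, i)`: the probability that `B_K^i` is not bridged in `B_{CK}`, for the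
free-boundary FK measure on `B_{CK}`. -/
def qNotBridged (N K C : ℕ) (q lam : ℝ) (i : ℤ) : ℝ :=
  fkProb (blockF N (C * K) 0) (pc q) lam q (freeBC N) fun ω => ¬ Bridged ω K C i

/-! ### The dual of a page -/

/-- The primal vertex of page `u` at the point `(x, y)` (spine vertex when `y ≤ 0`). -/
def pvert (N : ℕ) (u : Fin N) (x y : ℤ) : BookVertex N :=
  if y ≤ 0 then Sum.inl x else Sum.inr (u, x, (y - 1).toNat)

/-- Dual adjacency, in the dual of page `u`, between the faces with lower-left corners
`d` and `d'`, crossing a closed (or absent) primal edge of the page.  Only faces above the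
spine (`d.2 ≥ 0`) are used here. -/
def dualOpenAdj {s : Finset (Sym2 (BookVertex N))} (ω : Config s) (u : Fin N)
    (d d' : ℤ × ℤ) : Prop :=
  (0 ≤ d.2 ∧ 0 ≤ d'.2) ∧
    ((d'.2 = d.2 ∧ (d'.1 = d.1 + 1 ∨ d.1 = d'.1 + 1) ∧
        closedEdge ω (pvert N u (max d.1 d'.1) d.2) (pvert N u (max d.1 d'.1) (d.2 + 1))) ∨
      (d'.1 = d.1 ∧ (d'.2 = d.2 + 1 ∨ d.2 = d'.2 + 1) ∧
        closedEdge ω (pvert N u d.1 (max d.2 d'.2)) (pvert N u (d.1 + 1) (max d.2 d'.2))))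

/-- Dual adjacency in the dual of the half-plane `ℍ = 𝔹_1`, also allowing the faces below
the spine (row `-1`) and the dual edges crossing the spine edges. -/
def dualOpenAdjH {s : Finset (Sym2 (BookVertex 1))} (ω : Config s) (d d' : ℤ × ℤ) : Prop :=
  dualOpenAdj ω 0 d d' ∨
    (d'.1 = d.1 ∧ ((d.2 = -1 ∧ d'.2 = 0) ∨ (d'.2 = -1 ∧ d.2 = 0)) ∧
      closedEdge ω (Sum.inl d.1 : BookVertex 1) (Sum.inl (d.1 + 1) : BookVertex 1))

/-- A dual path: a chain of faces for the dual adjacency `Radj`, starting at a face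
satisfying `P`, ending at a face satisfying `Q`, all faces satisfying `inside`. -/
def DualPath (Radj : ℤ × ℤ → ℤ × ℤ → Prop) (P Q inside : ℤ × ℤ → Prop) : Prop :=
  ∃ l : List (ℤ × ℤ), l ≠ [] ∧ List.Chain' Radj l ∧ (∀ d ∈ l, inside d) ∧
    (∃ d, l.head? = some d ∧ P d) ∧ ∃ d, l.getLast? = some d ∧ Q d

/-- The face with lower-left corner `d` is adjacent to `∂Λ_k` (one of its corners is a
vertex of `∂Λ_k`). -/
def faceTouches (N : ℕ) (u : Fin N) (k : ℕ) (d : ℤ × ℤ) : Prop :=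
  ∃ x y : ℤ, (x = d.1 ∨ x = d.1 + 1) ∧ (y = d.2 ∨ y = d.2 + 1) ∧ 0 ≤ y ∧
    pvert N u x y ∈ bdry N k

/-- There is a dual-open path from `∂Λ_k` to `∂Λ_K` in the dual of page `u`, within the
region of radius `M`. -/
def DualArmPage {s : Finset (Sym2 (BookVertex N))} (ω : Config s) (u : Fin N)
    (k K M : ℕ) : Prop :=
  DualPath (dualOpenAdj ω u) (faceTouches N u k) (faceTouches N u K)
    fun d => -(M : ℤ) ≤ d.1 ∧ d.1 < (M : ℤ) ∧ 0 ≤ d.2 ∧ d.2 < (M : ℤ)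

/-- The event `F(k, K)ᶜ`: in every page there is a dual-open path from `∂Λ_k` to `∂Λ_K`. -/
def AllPagesDualArm {s : Finset (Sym2 (BookVertex N))} (ω : Config s) (k K M : ℕ) : Prop :=
  ∀ u : Fin N, DualArmPage ω u k K M

/-- `α` is a valid disconnection exponent for `(q, N)`:
`P^0_{B_{ρK}, p_c, p_c, q}[F(K, ρK)ᶜ] ≤ ρ^{-α}` for all `K ≥ 1` and all large `ρ`. -/
def ValidDiscExp (q : ℝ) (N : ℕ) (α : ℝ) : Prop :=
  ∃ ρ₀ : ℕ, ∀ K ρ : ℕ, 1 ≤ K → ρ₀ ≤ ρ →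
    fkProb (blockF N (ρ * K) 0) (pc q) (pc q) q (freeBC N)
      (fun ω => AllPagesDualArm ω K (ρ * K) (ρ * K)) ≤ (ρ : ℝ) ^ (-α)

/-- The event `F(K, DK, ρ, η)`: with `R_k = K (2ρ)^k` there are at least `η log D` integers
`k ≥ 0` with `R_{k+1} ≤ DK` such that `F(R_k, R_{k+1}/2)` occurs (i.e., in some page
`∂Λ_{R_k}` is disconnected from `∂Λ_{R_{k+1}/2}`). -/
def BridgeScalesEvent {s : Finset (Sym2 (BookVertex N))} (ω : Config s)
    (K D ρ : ℕ) (η : ℝ) : Prop :=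
  η * Real.log (D : ℝ) ≤
    (((Finset.range (D + 1)).filter fun k =>
        K * (2 * ρ) ^ (k + 1) ≤ D * K ∧
          ∃ u : Fin N, ¬ DualArmPage ω u (K * (2 * ρ) ^ k) (K * (2 * ρ) ^ (k + 1) / 2)
            (D * K)).card : ℝ)

/-! ### Potts and Ising models -/

/-- The weight of a `q`-Potts configuration on `V` at inverse temperature `β` with
monochromatic boundary condition `τ`. -/
def pottsWeight (N : ℕ) (V : Finset (BookVertex N)) (q : ℕ) (β : ℝ) (τ : Fin q)
    (σ : {x // x ∈ V} → Fin q) : ℝ :=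
  Real.exp (β * ((1 / 2) * (∑ a : {x // x ∈ V}, ∑ b : {x // x ∈ V},
      (if adj N a.1 b.1 ∧ σ a = σ b then (1 : ℝ) else 0)) +
    ∑ a : {x // x ∈ V}, ((nbrs N a.1 \ V).card : ℝ) * (if σ a = τ then (1 : ℝ) else 0)))

/-- The probability of an event for the `q`-Potts model on `V` at inverse temperature `β`
with monochromatic boundary condition `τ`. -/
def pottsProb (N : ℕ) (V : Finset (BookVertex N)) (q : ℕ) (β : ℝ) (τ : Fin q)
    (A : ({x // x ∈ V} → Fin q) → Prop) : ℝ :=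
  (∑ σ : {x // x ∈ V} → Fin q, if A σ then pottsWeight N V q β τ σ else 0) /
    ∑ σ : {x // x ∈ V} → Fin q, pottsWeight N V q β τ σ

/-- Ising spins. -/
def spinVal (b : Bool) : ℝ := if b then 1 else -1

/-- The Ising weight on `V` at inverse temperature `β`, with coupling `J` on the spine edges
and `1` elsewhere, and external field `h`. -/
def isingWeight (N : ℕ) (V : Finset (BookVertex N)) (β J : ℝ) (h : BookVertex N → ℝ)
    (σ : {x // x ∈ V} → Bool) : ℝ :=
  Real.exp (β * ((1 / 2) * (∑ a : {x // x ∈ V}, ∑ b : {x // x ∈ V},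
      (if adj N a.1 b.1 then
        (if a.1.isLeft = true ∧ b.1.isLeft = true then J else 1) * spinVal (σ a) * spinVal (σ b)
      else 0)) +
    ∑ a : {x // x ∈ V}, h a.1 * spinVal (σ a)))

/-- The Ising correlation `⟨σ_A⟩` on `V`. -/
def isingCorr (N : ℕ) (V : Finset (BookVertex N)) (β J : ℝ) (h : BookVertex N → ℝ)
    (A : Finset (BookVertex N)) : ℝ :=
  (∑ σ : {x // x ∈ V} → Bool, isingWeight N V β J h σ *
      ∏ a ∈ V.attach.filter (fun a => a.1 ∈ A), spinVal (σ a)) /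
    ∑ σ : {x // x ∈ V} → Bool, isingWeight N V β J h σ

/-- The `+` boundary field: each vertex receives a field equal to its number of
neighbours outside `V`. -/
def plusField (N : ℕ) (V : Finset (BookVertex N)) : BookVertex N → ℝ :=
  fun x => ((nbrs N x \ V).card : ℝ)

/-- The critical inverse temperature of the Ising model: `β_c = ½ log(1 + √2)`. -/
def betaC : ℝ := (1 / 2) * Real.log (1 + Real.sqrt 2)

/-- The vertex `v` lies in page `u` (strictly above the spine). -/
def inPage {N : ℕ} (u : Fin N) (v : BookVertex N) : Prop := ∃ x y, v = Sum.inr (u, x, y)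

/-- `v` lies in the first page or on the spine. -/
def inFirstPage {N : ℕ} : BookVertex N → Prop
  | Sum.inl _ => True
  | Sum.inr (u, _, _) => u.val = 0

/-- The half-plane `ℍ` (spine together with the first page) viewed inside `ℤ² = 𝔹_2`,
intersected with `Λ_n`. -/
def halfBox (n : ℕ) : Finset (BookVertex 2) :=
  ((Finset.Icc (-(n : ℤ)) (n : ℤ)).image Sum.inl) ∪
    ((({0} : Finset (Fin 2)) ×ˢ (Finset.Icc (-(n : ℤ)) (n : ℤ)) ×ˢ
        (Finset.Iio n)).image Sum.inr)

/-- Map a vertex of `𝔹_3` to the corresponding vertex of the half-plane inside `𝔹_2`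
(forgetting the page index). -/
def toH : BookVertex 3 → BookVertex 2 :=
  Sum.elim Sum.inl fun p => Sum.inr ((0 : Fin 2), p.2)

/-! ### Bernoulli percolation and Bernoulli disorder -/

/-- `e` is an edge of the book graph. -/
def IsEdge (N : ℕ) (e : Sym2 (BookVertex N)) : Prop := ∃ a b, adj N a b ∧ e = s(a, b)

/-- The Bernoulli parameter of an edge: `lam` on spine edges and `1/2 = p_c(1)` elsewhere. -/
def percParam {N : ℕ} (lam : ℝ) (e : Sym2 (BookVertex N)) : ℝ :=
  if IsSpineEdge e then lam else 1 / 2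

/-- `μ` is the law of independent bond percolation on `𝔹_N` in which each spine edge is
open with probability `lam` and every other edge with probability `1/2`. -/
def IsBernoulliBook (N : ℕ) (lam : ℝ) (μ : Measure (Sym2 (BookVertex N) → Bool)) : Prop :=
  IsProbabilityMeasure μ ∧
    ∀ t : Finset (Sym2 (BookVertex N)), (∀ e ∈ t, IsEdge N e) →
      ∀ f : Sym2 (BookVertex N) → Bool,
        μ {ω | ∀ e ∈ t, ω e = f e} =
          ∏ e ∈ t, ENNReal.ofReal (if f e then percParam lam e else 1 - percParam lam e)

/-- Open adjacency for a configuration on all edges of the book. -/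
def openAdjFull {N : ℕ} (ω : Sym2 (BookVertex N) → Bool) (a b : BookVertex N) : Prop :=
  adj N a b ∧ ω s(a, b) = true

/-- The origin lies in an infinite open cluster. -/
def PercolatesAtOrigin (N : ℕ) (ω : Sym2 (BookVertex N) → Bool) : Prop :=
  {v : BookVertex N | Relation.ReflTransGen (openAdjFull ω) (Sum.inl 0) v}.Infinite

/-- `μ` is the law of an i.i.d. Bernoulli(`ρ`) family indexed by `ℤ`. -/
def IsBernoulliSeq (ρ : ℝ) (μ : Measure (ℤ → Bool)) : Prop :=
  IsProbabilityMeasure μ ∧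
    ∀ t : Finset ℤ, ∀ f : ℤ → Bool,
      μ {η | ∀ i ∈ t, η i = f i} = ∏ i ∈ t, ENNReal.ofReal (if f i then ρ else 1 - ρ)

/-- The external field putting `+1` at the bottom-line sites `i` with `η i = 1`. -/
def etaField (η : ℤ → Bool) : BookVertex 1 → ℝ :=
  Sum.elim (fun i => if η i = true then 1 else 0) fun _ => 0

/-- The external field putting `+1` at every bottom-line site. -/
def lineField : BookVertex 1 → ℝ := Sum.elim (fun _ => 1) fun _ => 0

/-- The boundary wiring identifying all bottom-line vertices of `S(η) ∩ Λ_m` with one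
another, and all vertices of `∂Λ_m` with one another. -/
def etaWiring (η : ℤ → Bool) (m : ℕ) : BookVertex 1 → BookVertex 1 → Prop :=
  fun a b => a ∈ box 1 m ∧ b ∈ box 1 m ∧
    (((∃ i : ℤ, η i = true ∧ a = Sum.inl i) ∧ (∃ j : ℤ, η j = true ∧ b = Sum.inl j)) ∨
      (a ∈ bdry 1 m ∧ b ∈ bdry 1 m))

/-- The region `A(M, K)`: the half-annulus of the first page together with the blocks
`B_K^j`, `M < j < 2M`. -/
def anchorRegion (N M K : ℕ) : Finset (BookVertex N) :=
  ((box N (2 * M * K) \ box N (M * K)).filter fun v => inFirstPage v) ∪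
    (Finset.Ioo (M : ℤ) (2 * M : ℤ)).biUnion fun j => blockF N K j

end Book

open Book

/-! Below the threshold `u_n ≤ 1/(1200 C_n²)` the quadratic term `6 C_n² u_n²` is at most
`u_n/200`, so `u_{n+1} ≤ (3/200) u_n`. Passing from `C_n` to `C_{n+1}` lowers the threshold only
by the factor `((n+1)/n)⁶ ≤ 64 < 200/3`, so the bound propagates. -/

theorem three_mul_add_one_pow_six_le {x : ℝ} (hx : 1 ≤ x) :
    3 * (x + 1) ^ 6 ≤ 200 * x ^ 6 := by
  have h : (x + 1) ^ 6 ≤ (2 * x) ^ 6 := pow_le_pow_left₀ (by linarith) (by linarith) 6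
  nlinarith [pow_nonneg (zero_le_one.trans hx) 6]

theorem div_hundred_add_mul_sq_le {c x : ℝ} (hc : 0 ≤ c) (hx : 0 ≤ x)
    (hxc : x ≤ 1 / (1200 * c)) : x / 100 + 6 * c * x ^ 2 ≤ 3 / 200 * x := by
  have hcx : 1200 * c * x ≤ 1 := by
    rcases hc.eq_or_lt with rfl | hc
    · simp
    · rwa [le_div_iff₀ (by positivity), mul_comm] at hxc
  nlinarith

theorem three_div_two_hundred_mul_one_div_le {x C : ℝ} (hx : 1 ≤ x) :
    3 / 200 * (1 / (1200 * (x ^ 3 * C) ^ 2)) ≤ 1 / (1200 * ((x + 1) ^ 3 * C) ^ 2) := by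
  rcases eq_or_ne C 0 with rfl | hC
  · simp
  have hx0 : 0 < x := zero_lt_one.trans_le hx
  rw [mul_one_div, div_div, div_le_div_iff₀ (by positivity) (by positivity)]
  nlinarith [three_mul_add_one_pow_six_le hx, sq_nonneg C, pow_pos hx0 6]

theorem renormalization_induction_general (C1 : ℝ) (u : ℕ → ℝ)
    (hpos : ∀ n : ℕ, 1 ≤ n → 0 ≤ u n)
    (h1 : u 1 ≤ 1 / (1200 * C1 ^ 2))
    (hrec : ∀ n : ℕ, 1 ≤ n →
      u (n + 1) ≤ (1 / 100) * u n + 6 * ((n : ℝ) ^ 3 * C1) ^ 2 * u n ^ 2) :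
    ∀ n : ℕ, 1 ≤ n → u n ≤ 1 / (1200 * ((n : ℝ) ^ 3 * C1) ^ 2) := by
  intro n hn
  induction n, hn using Nat.le_induction with
  | base => simpa using h1
  | succ n hn ih =>
    have hstep := div_hundred_add_mul_sq_le (sq_nonneg _) (hpos n hn) ih
    push_cast
    calc u (n + 1) ≤ (1 / 100) * u n + 6 * ((n : ℝ) ^ 3 * C1) ^ 2 * u n ^ 2 := hrec n hn
      _ ≤ 3 / 200 * u n := by linarith
      _ ≤ 3 / 200 * (1 / (1200 * ((n : ℝ) ^ 3 * C1) ^ 2)) := by gcongr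
      _ ≤ 1 / (1200 * (((n : ℝ) + 1) ^ 3 * C1) ^ 2) :=
        three_div_two_hundred_mul_one_div_le (by exact_mod_cast hn)

/-- the inductive bound on the renormalized bad-block probabilities:
with `C_n = n³ C₁`, if `u₁ ≤ 1/(1200 C₁²)` and
`u_{n+1} ≤ u_n/100 + 6 C_n² u_n²`, then `u_n ≤ 1/(1200 C_n²)` for every `n ≥ 1`. -/
theorem renormalization_induction (C1 : ℝ) (hC1 : 1 ≤ C1) (u : ℕ → ℝ)
    (hpos : ∀ n : ℕ, 1 ≤ n → 0 ≤ u n)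
    (h1 : u 1 ≤ 1 / (1200 * C1 ^ 2))
    (hrec : ∀ n : ℕ, 1 ≤ n →
      u (n + 1) ≤ (1 / 100) * u n + 6 * ((n : ℝ) ^ 3 * C1) ^ 2 * u n ^ 2) :
    ∀ n : ℕ, 1 ≤ n → u n ≤ 1 / (1200 * ((n : ℝ) ^ 3 * C1) ^ 2) :=
  renormalization_induction_general C1 u hpos h1 hrec

end
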